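/- arXiv:1102.3571 — 3 statements merged into one kernel-verified Lean document; each statement's English description precedes it below -/
import Mathlib

section
/- Let 𝒫 be a hereditary class of finite simple graphs, let ℱ be a family of finite simple graphs, and let 𝒫_ℱ be the class of graphs in 𝒫 containing no induced subgraph isomorphic to any member of ℱ. Let W be a graphon. Then there exists a sequence of graphs in 𝒫_ℱ converging to W if and only if there exists a sequence of graphs in 𝒫 converging to W and t_ind(F,W) = 0 for every F ∈ ℱ. -/
open MeasureTheory Filter
open scoped Classical

noncomputable section

/-- A graphon: a symmetric measurable kernel with values in `[0,1]` on `[0,1]²`. -/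
def IsGraphon (W : ℝ → ℝ → ℝ) : Prop :=
  Measurable (Function.uncurry W) ∧
  (∀ x y, W x y = W y x) ∧
  (∀ x y, x ∈ Set.Icc (0:ℝ) 1 → y ∈ Set.Icc (0:ℝ) 1 → W x y ∈ Set.Icc (0:ℝ) 1)

/-- Lebesgue (product) measure on the cube `[0,1]ⁿ`. -/
def cubeMeasure (n : ℕ) : Measure (Fin n → ℝ) :=
  Measure.pi fun _ => volume.restrict (Set.Icc (0:ℝ) 1)

/-- Induced-subgraph density `t_ind(F, W)` of a graph `F` in a graphon `W`. -/
def tIndW {m : ℕ} (F : SimpleGraph (Fin m)) (W : ℝ → ℝ → ℝ) : ℝ :=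
  ∫ x : Fin m → ℝ,
    ∏ p ∈ Finset.univ.filter (fun p : Fin m × Fin m => p.1 < p.2),
      (if F.Adj p.1 p.2 then W (x p.1) (x p.2) else 1 - W (x p.1) (x p.2))
    ∂(cubeMeasure m)

/-- Induced-subgraph density `t_ind(F, G)` for finite labelled graphs:
the proportion of injections `Fin m ↪ Fin n` that are induced embeddings. -/
def tIndG {m n : ℕ} (F : SimpleGraph (Fin m)) (G : SimpleGraph (Fin n)) : ℝ :=
  ((Finset.univ.filter fun φ : Fin m ↪ Fin n =>
      ∀ u v, G.Adj (φ u) (φ v) ↔ F.Adj u v).card : ℝ) / (n.descFactorial m : ℝ)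

/-- A sequence of finite graphs converges to the graphon `W`:
the number of vertices tends to infinity and every induced density converges. -/
def ConvergesTo (G : ℕ → Σ n : ℕ, SimpleGraph (Fin n)) (W : ℝ → ℝ → ℝ) : Prop :=
  Tendsto (fun k => (G k).1) atTop atTop ∧
  ∀ (m : ℕ) (F : SimpleGraph (Fin m)),
    Tendsto (fun k => tIndG F (G k).2) atTop (nhds (tIndW F W))

/-- `F` is isomorphic to an induced subgraph of `G`. -/
def IsInducedSubgraph {m n : ℕ} (F : SimpleGraph (Fin m)) (G : SimpleGraph (Fin n)) : Prop :=
  ∃ φ : Fin m ↪ Fin n, ∀ u v, G.Adj (φ u) (φ v) ↔ F.Adj u v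

/-- A hereditary graph class: closed under isomorphism and induced subgraphs. -/
def Hereditary (P : ∀ n : ℕ, Set (SimpleGraph (Fin n))) : Prop :=
  ∀ (m n : ℕ) (F : SimpleGraph (Fin m)) (G : SimpleGraph (Fin n)),
    G ∈ P n → IsInducedSubgraph F G → F ∈ P m

abbrev nu : Measure ℝ := volume.restrict (Set.Icc (0:ℝ) 1)

instance : IsProbabilityMeasure nu := by
  constructor
  simp [Real.volume_Icc]

instance (n : ℕ) : IsProbabilityMeasure (cubeMeasure n) := by
  unfold cubeMeasure; infer_instance

/-- pushforward of cube measure along precomposition with an injective map -/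
lemma map_comp_inj {ι : Type} [Fintype ι] {n : ℕ} (χ : ι → Fin n) (hχ : Function.Injective χ) :
    Measure.map (fun x : Fin n → ℝ => x ∘ χ) (cubeMeasure n) = Measure.pi (fun _ : ι => nu) := by
  have hmeas : Measurable (fun x : Fin n → ℝ => x ∘ χ) :=
    measurable_pi_lambda _ (fun i => measurable_pi_apply (χ i))
  refine (Measure.pi_eq fun s hs => ?_).symm
  rw [Measure.map_apply hmeas (MeasurableSet.univ_pi hs)]
  have hpre : (fun x : Fin n → ℝ => x ∘ χ) ⁻¹' (Set.pi Set.univ s)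
      = Set.pi Set.univ (fun j => ⋂ (i : ι) (_ : χ i = j), s i) := by
    ext x
    simp only [Set.mem_preimage, Set.mem_pi, Set.mem_univ, true_implies, Set.mem_iInter,
      Function.comp]
    constructor
    · intro h j i hij; subst hij; exact h i
    · intro h i; exact h (χ i) i rfl
  rw [hpre]
  unfold cubeMeasure
  rw [Measure.pi_pi]
  set t := fun j : Fin n => ⋂ (i : ι) (_ : χ i = j), s i with ht
  have h1 : ∀ i : ι, t (χ i) = s i := by
    intro i
    apply Set.eq_of_subset_of_subset
    · intro x hx
      simp only [t, Set.mem_iInter] at hx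
      exact hx i rfl
    · intro x hx
      simp only [t, Set.mem_iInter]
      intro i' hij
      rwa [hχ hij]
  have h2 : ∀ j, j ∉ Finset.univ.image χ → nu (t j) = 1 := by
    intro j hj
    have : t j = Set.univ := by
      apply Set.eq_univ_of_forall
      intro x
      simp only [t, Set.mem_iInter]
      intro i hij
      exact absurd (Finset.mem_image.2 ⟨i, Finset.mem_univ i, hij⟩) hj
    rw [this]; exact measure_univ
  rw [← Finset.prod_subset (Finset.subset_univ (Finset.univ.image χ)) (fun j _ hj => h2 j hj),
    Finset.prod_image (fun a _ b _ hab => hχ hab)]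
  simp [h1]

def pairsF (n : ℕ) : Finset (Fin n × Fin n) :=
  Finset.univ.filter (fun p : Fin n × Fin n => p.1 < p.2)

/-- generic labelled product over a set of pairs -/
def gProd (W : ℝ → ℝ → ℝ) {n : ℕ} (S : Finset (Fin n × Fin n)) (a : Fin n × Fin n → Bool)
    (x : Fin n → ℝ) : ℝ :=
  ∏ p ∈ S, (if a p then W (x p.1) (x p.2) else 1 - W (x p.1) (x p.2))

lemma tIndW_eq {m : ℕ} (F : SimpleGraph (Fin m)) (W : ℝ → ℝ → ℝ) :
    tIndW F W = ∫ x, gProd W (pairsF m) (fun p => decide (F.Adj p.1 p.2)) x ∂(cubeMeasure m) := by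
  unfold tIndW gProd pairsF
  congr 1
  ext x
  refine Finset.prod_congr rfl (fun p _ => ?_)
  by_cases h : F.Adj p.1 p.2 <;> simp [h]

lemma measurable_gProd {W : ℝ → ℝ → ℝ} (hW : Measurable (Function.uncurry W)) {n : ℕ}
    (S : Finset (Fin n × Fin n)) (a : Fin n × Fin n → Bool) :
    Measurable (gProd W S a) := by
  apply Finset.measurable_prod
  intro p _
  have h : Measurable (fun x : Fin n → ℝ => W (x p.1) (x p.2)) :=
    hW.comp (show Measurable fun x : Fin n → ℝ => (x p.1, x p.2) from
      (measurable_pi_apply p.1).prodMk (measurable_pi_apply p.2))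
  by_cases hb : a p = true <;> simp [hb]
  · exact h
  · exact measurable_const.sub h

lemma ae_cube (n : ℕ) : ∀ᵐ x ∂(cubeMeasure n), ∀ i, x i ∈ Set.Icc (0:ℝ) 1 := by
  rw [ae_iff]
  have hc : cubeMeasure n (Set.pi Set.univ (fun _ => Set.Icc (0:ℝ) 1))ᶜ = 0 := by
    rw [measure_compl (MeasurableSet.univ_pi (fun _ => measurableSet_Icc)) (measure_ne_top _ _)]
    unfold cubeMeasure
    rw [Measure.pi_pi]
    simp [measure_univ]
  refine measure_mono_null ?_ hc
  intro x hx hmem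
  exact hx (fun i => hmem i (Set.mem_univ i))

lemma gProd_mem_Icc {W : ℝ → ℝ → ℝ} (hW : IsGraphon W) {n : ℕ}
    (S : Finset (Fin n × Fin n)) (a : Fin n × Fin n → Bool) {x : Fin n → ℝ}
    (hx : ∀ i, x i ∈ Set.Icc (0:ℝ) 1) : gProd W S a x ∈ Set.Icc (0:ℝ) 1 := by
  have hfac : ∀ p ∈ S, (if a p then W (x p.1) (x p.2) else 1 - W (x p.1) (x p.2)) ∈
      Set.Icc (0:ℝ) 1 := by
    intro p _
    have := hW.2.2 (x p.1) (x p.2) (hx p.1) (hx p.2)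
    by_cases hb : a p = true <;> simp [hb] <;> constructor <;> linarith [this.1, this.2]
  constructor
  · exact Finset.prod_nonneg (fun p hp => (hfac p hp).1)
  · exact Finset.prod_le_one (fun p hp => (hfac p hp).1) (fun p hp => (hfac p hp).2)

lemma integrable_gProd {W : ℝ → ℝ → ℝ} (hW : IsGraphon W) {n : ℕ}
    (S : Finset (Fin n × Fin n)) (a : Fin n × Fin n → Bool) :
    Integrable (gProd W S a) (cubeMeasure n) := by
  apply Integrable.mono' (integrable_const (1:ℝ)) (measurable_gProd hW.1 S a).aestronglyMeasurable
  filter_upwards [ae_cube n] with x hx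
  have := gProd_mem_Icc hW S a hx
  rw [Real.norm_eq_abs, abs_le]
  exact ⟨by linarith [this.1], this.2⟩

lemma integral_gProd_mem_Icc {W : ℝ → ℝ → ℝ} (hW : IsGraphon W) {n : ℕ}
    (S : Finset (Fin n × Fin n)) (a : Fin n × Fin n → Bool) :
    ∫ x, gProd W S a x ∂(cubeMeasure n) ∈ Set.Icc (0:ℝ) 1 := by
  constructor
  · apply integral_nonneg_of_ae
    filter_upwards [ae_cube n] with x hx using (gProd_mem_Icc hW S a hx).1
  · calc ∫ x, gProd W S a x ∂(cubeMeasure n) ≤ ∫ _x, (1:ℝ) ∂(cubeMeasure n) := by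
          apply integral_mono_ae (integrable_gProd hW S a) (integrable_const 1)
          filter_upwards [ae_cube n] with x hx using (gProd_mem_Icc hW S a hx).2
        _ = 1 := by simp

lemma tIndW_nonneg {W : ℝ → ℝ → ℝ} (hW : IsGraphon W) {m : ℕ} (F : SimpleGraph (Fin m)) :
    0 ≤ tIndW F W := by
  rw [tIndW_eq]; exact (integral_gProd_mem_Icc hW _ _).1

lemma mem_pairsF {n : ℕ} {p : Fin n × Fin n} : p ∈ pairsF n ↔ p.1 < p.2 := by
  simp [pairsF]

def graphOf {n : ℕ} (f : {p // p ∈ pairsF n} → Bool) : SimpleGraph (Fin n) where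
  Adj i j := (∃ h : (i, j) ∈ pairsF n, f ⟨(i, j), h⟩ = true) ∨
    (∃ h : (j, i) ∈ pairsF n, f ⟨(j, i), h⟩ = true)
  symm := by constructor; intro i j h; tauto
  loopless := by
    constructor
    intro i h
    rcases h with ⟨h, _⟩ | ⟨h, _⟩ <;> exact absurd (mem_pairsF.mp h) (lt_irrefl i)

lemma graphOf_adj {n : ℕ} (f : {p // p ∈ pairsF n} → Bool) {p : Fin n × Fin n}
    (hp : p ∈ pairsF n) : decide ((graphOf f).Adj p.1 p.2) = f ⟨p, hp⟩ := by
  have hlt := mem_pairsF.mp hp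
  have : (graphOf f).Adj p.1 p.2 ↔ f ⟨p, hp⟩ = true := by
    constructor
    · rintro (⟨h, hf⟩ | ⟨h, hf⟩)
      · convert hf using 3 <;> simp
      · exact absurd (mem_pairsF.mp h) (asymm hlt)
    · intro hf
      left
      refine ⟨by simpa using hp, ?_⟩
      convert hf using 3 <;> simp
  rcases Bool.eq_false_or_eq_true (f ⟨p, hp⟩) with hb | hb <;> rw [hb] at this ⊢ <;> simp [this]

def graphEquiv (n : ℕ) : SimpleGraph (Fin n) ≃ ({p // p ∈ pairsF n} → Bool) where
  toFun H q := decide (H.Adj q.1.1 q.1.2)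
  invFun := graphOf
  left_inv H := by
    ext i j
    simp only [graphOf, decide_eq_true_eq]
    constructor
    · rintro (⟨h, hf⟩ | ⟨h, hf⟩)
      · exact hf
      · exact hf.symm
    · intro h
      rcases lt_trichotomy i j with hlt | heq | hgt
      · exact Or.inl ⟨mem_pairsF.mpr hlt, h⟩
      · exact absurd heq h.ne
      · exact Or.inr ⟨mem_pairsF.mpr hgt, h.symm⟩
  right_inv f := by
    funext q
    have := graphOf_adj f q.2
    simpa using this

lemma sum_graphs (n : ℕ) (g : (Fin n × Fin n) → Bool → ℝ)
    (h1 : ∀ p ∈ pairsF n, g p true + g p false = 1)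
    (T : Finset (Fin n × Fin n)) (hT : T ⊆ pairsF n) (a : Fin n × Fin n → Bool) :
    ∑ H : SimpleGraph (Fin n),
      (if ∀ p ∈ T, decide (H.Adj p.1 p.2) = a p
        then ∏ p ∈ pairsF n, g p (decide (H.Adj p.1 p.2)) else 0)
    = ∏ p ∈ T, g p (a p) := by
  classical
  set P := {p // p ∈ pairsF n}
  set h : P → Bool → ℝ := fun q b => if q.1 ∈ T ∧ b ≠ a q.1 then 0 else g q.1 b with hh
  rw [← Equiv.sum_comp (graphEquiv n).symm]
  have key : ∀ f : P → Bool,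
      (if ∀ p ∈ T, decide (((graphEquiv n).symm f).Adj p.1 p.2) = a p
        then ∏ p ∈ pairsF n, g p (decide (((graphEquiv n).symm f).Adj p.1 p.2)) else 0)
      = ∏ q : P, h q (f q) := by
    intro f
    have hadj : ∀ (p : Fin n × Fin n) (hp : p ∈ pairsF n),
        decide (((graphEquiv n).symm f).Adj p.1 p.2) = f ⟨p, hp⟩ := fun p hp => graphOf_adj f hp
    have hprod : ∏ p ∈ pairsF n, g p (decide (((graphEquiv n).symm f).Adj p.1 p.2))
        = ∏ q : P, g q.1 (f q) := by
      rw [← Finset.prod_attach (pairsF n)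
        (fun p => g p (decide (((graphEquiv n).symm f).Adj p.1 p.2)))]
      rw [Finset.univ_eq_attach]
      exact Finset.prod_congr rfl (fun q _ => by rw [hadj q.1 q.2])
    by_cases hc : ∀ p ∈ T, decide (((graphEquiv n).symm f).Adj p.1 p.2) = a p
    · rw [if_pos hc, hprod]
      refine Finset.prod_congr rfl (fun q _ => ?_)
      rw [hh]
      by_cases hq : q.1 ∈ T
      · have := hc q.1 (hq)
        rw [hadj q.1 q.2] at this
        rw [Subtype.coe_eta] at this
        simp [hq, this]
      · simp [hq]
    · rw [if_neg hc]
      push_neg at hc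
      obtain ⟨p, hpT, hpne⟩ := hc
      rw [hadj p (hT hpT)] at hpne
      refine (Finset.prod_eq_zero (Finset.mem_univ (⟨p, hT hpT⟩ : P)) ?_).symm
      rw [hh]
      simp [hpT, hpne]
  rw [Finset.sum_congr rfl (fun f _ => key f)]
  have := (Finset.prod_univ_sum (fun _ : P => (Finset.univ : Finset Bool)) h).symm
  rw [Fintype.piFinset_univ] at this
  rw [this]
  have hfac : ∀ q : P, ∑ b : Bool, h q b = if q.1 ∈ T then g q.1 (a q.1) else 1 := by
    intro q
    rw [Fintype.sum_bool, hh]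
    by_cases hq : q.1 ∈ T
    · rcases Bool.eq_false_or_eq_true (a q.1) with hb | hb <;> simp [hq, hb]
    · simp [hq, h1 q.1 q.2]
  rw [Finset.prod_congr rfl (fun q _ => hfac q), Finset.univ_eq_attach,
    Finset.prod_attach (pairsF n) (fun p => if p ∈ T then g p (a p) else 1),
    ← Finset.prod_filter]
  congr 1
  rw [Finset.filter_mem_eq_inter, Finset.inter_eq_right.mpr hT]

variable {m n : ℕ}

def sortp {n : ℕ} (p : Fin n × Fin n) : Fin n × Fin n := if p.1 < p.2 then p else p.swap

variable {m n : ℕ}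

lemma sortp_mem {p : Fin n × Fin n} (h : p.1 ≠ p.2) : sortp p ∈ pairsF n := by
  unfold sortp
  split_ifs with hlt
  · exact mem_pairsF.mpr hlt
  · exact mem_pairsF.mpr (lt_of_le_of_ne (not_lt.mp hlt) (Ne.symm h))

def Tset (φ : Fin m ↪ Fin n) : Finset (Fin n × Fin n) :=
  (pairsF m).image (fun s => sortp (φ s.1, φ s.2))

lemma emb_ne (φ : Fin m ↪ Fin n) {s : Fin m × Fin m} (hs : s ∈ pairsF m) :
    φ s.1 ≠ φ s.2 := fun h => (mem_pairsF.mp hs).ne (φ.injective h)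

lemma Tset_subset (φ : Fin m ↪ Fin n) : Tset φ ⊆ pairsF n := by
  intro p hp
  obtain ⟨s, hs, rfl⟩ := Finset.mem_image.mp hp
  exact sortp_mem (emb_ne φ hs)

lemma Tset_injOn (φ : Fin m ↪ Fin n) : ∀ s ∈ pairsF m, ∀ t ∈ pairsF m,
    sortp (φ s.1, φ s.2) = sortp (φ t.1, φ t.2) → s = t := by
  intro s hs t ht heq
  have hs' := mem_pairsF.mp hs
  have ht' := mem_pairsF.mp ht
  unfold sortp at heq
  split_ifs at heq with h1 h2 h2 <;>
    simp only [Prod.swap_prod_mk, Prod.mk.injEq] at heq <;>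
    obtain ⟨e1, e2⟩ := heq
  · exact Prod.ext (φ.injective e1) (φ.injective e2)
  · rw [φ.injective e1, φ.injective e2] at hs'
    exact absurd ht' (asymm hs')
  · rw [φ.injective e2, φ.injective e1] at hs'
    exact absurd ht' (asymm hs')
  · exact Prod.ext (φ.injective e2) (φ.injective e1)

def aLab (φ : Fin m ↪ Fin n) (F : SimpleGraph (Fin m)) : Fin n × Fin n → Bool :=
  fun p => decide (∃ u v, φ u = p.1 ∧ φ v = p.2 ∧ F.Adj u v)

lemma aLab_sortp (φ : Fin m ↪ Fin n) (F : SimpleGraph (Fin m)) {s : Fin m × Fin m}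
    (_hs : s ∈ pairsF m) :
    aLab φ F (sortp (φ s.1, φ s.2)) = decide (F.Adj s.1 s.2) := by
  unfold aLab sortp
  split_ifs with hlt <;> simp only [Prod.swap_prod_mk] <;> rw [decide_eq_decide] <;> constructor
  · rintro ⟨u, v, hu, hv, ha⟩
    rwa [φ.injective hu, φ.injective hv] at ha
  · intro ha; exact ⟨s.1, s.2, rfl, rfl, ha⟩
  · rintro ⟨u, v, hu, hv, ha⟩
    rw [φ.injective hu, φ.injective hv] at ha
    exact ha.symm
  · intro ha; exact ⟨s.2, s.1, rfl, rfl, ha.symm⟩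

lemma aLab_false (ψ : Fin m ↪ Fin n) (F : SimpleGraph (Fin m)) {p : Fin n × Fin n}
    (h : ∀ u, ψ u ≠ p.1) : aLab ψ F p = false := by
  unfold aLab
  simp only [decide_eq_false_iff_not]
  rintro ⟨u, v, hu, _, _⟩
  exact h u hu

lemma mem_Tset_fst {φ : Fin m ↪ Fin n} {p : Fin n × Fin n} (hp : p ∈ Tset φ) :
    ∃ u, φ u = p.1 := by
  obtain ⟨s, _, rfl⟩ := Finset.mem_image.mp hp
  unfold sortp
  split_ifs
  · exact ⟨s.1, rfl⟩
  · exact ⟨s.2, rfl⟩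

lemma constraint_iff (φ : Fin m ↪ Fin n) (F : SimpleGraph (Fin m)) (H : SimpleGraph (Fin n)) :
    (∀ p ∈ Tset φ, decide (H.Adj p.1 p.2) = aLab φ F p) ↔
    (∀ u v, H.Adj (φ u) (φ v) ↔ F.Adj u v) := by
  constructor
  · intro h u v
    rcases lt_trichotomy u v with hlt | heq | hgt
    · have hs : ((u, v) : Fin m × Fin m) ∈ pairsF m := mem_pairsF.mpr hlt
      have hmem : sortp (φ u, φ v) ∈ Tset φ := Finset.mem_image.mpr ⟨(u, v), hs, rfl⟩
      have hp := h _ hmem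
      rw [aLab_sortp φ F hs] at hp
      unfold sortp at hp
      split_ifs at hp <;> simp only [Prod.swap_prod_mk] at hp <;>
        have := decide_eq_decide.mp hp
      · exact this
      · exact (H.adj_comm _ _).trans this
    · subst heq; simp [SimpleGraph.irrefl]
    · have hs : ((v, u) : Fin m × Fin m) ∈ pairsF m := mem_pairsF.mpr hgt
      have hmem : sortp (φ v, φ u) ∈ Tset φ := Finset.mem_image.mpr ⟨(v, u), hs, rfl⟩
      have hp := h _ hmem
      rw [aLab_sortp φ F hs] at hp
      unfold sortp at hp
      split_ifs at hp <;> simp only [Prod.swap_prod_mk] at hp <;>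
        have := decide_eq_decide.mp hp
      · exact (H.adj_comm _ _).trans (this.trans (F.adj_comm _ _))
      · exact this.trans (F.adj_comm _ _)
  · intro h p hp
    obtain ⟨s, hs, rfl⟩ := Finset.mem_image.mp hp
    rw [aLab_sortp φ F hs]
    unfold sortp
    split_ifs <;> simp only [Prod.swap_prod_mk] <;> rw [decide_eq_decide]
    · exact h s.1 s.2
    · exact (H.adj_comm _ _).trans (h s.1 s.2)

lemma prod_Tset (W : ℝ → ℝ → ℝ) (hsym : ∀ a b, W a b = W b a) (φ : Fin m ↪ Fin n)
    (F : SimpleGraph (Fin m)) (x : Fin n → ℝ) :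
    ∏ p ∈ Tset φ, (if aLab φ F p then W (x p.1) (x p.2) else 1 - W (x p.1) (x p.2))
    = gProd W (pairsF m) (fun s => decide (F.Adj s.1 s.2)) (x ∘ φ) := by
  unfold Tset gProd
  rw [Finset.prod_image (Tset_injOn φ)]
  refine Finset.prod_congr rfl (fun s hs => ?_)
  rw [aLab_sortp φ F hs]
  unfold sortp
  split_ifs <;> simp only [Prod.swap_prod_mk, Function.comp] <;>
    first
      | rfl
      | rw [hsym (x (φ s.2)) (x (φ s.1))]


lemma integral_gProd_comp {W : ℝ → ℝ → ℝ} (hW : IsGraphon W) (φ : Fin m ↪ Fin n)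
    (a : Fin m × Fin m → Bool) :
    ∫ x, gProd W (pairsF m) a (x ∘ φ) ∂(cubeMeasure n)
      = ∫ y, gProd W (pairsF m) a y ∂(cubeMeasure m) := by
  have hmeas : Measurable (fun x : Fin n → ℝ => x ∘ (fun i => φ i)) :=
    measurable_pi_lambda _ (fun i => measurable_pi_apply (φ i))
  have hmap := map_comp_inj (fun i => φ i) φ.injective
  have hcube : (Measure.pi fun _ : Fin m => nu) = cubeMeasure m := rfl
  rw [← hcube, ← hmap,
    integral_map hmeas.aemeasurable (measurable_gProd hW.1 _ a).aestronglyMeasurable]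

lemma integral_gProd_comp_two {W : ℝ → ℝ → ℝ} (hW : IsGraphon W) (φ ψ : Fin m ↪ Fin n)
    (hd : ∀ u v, φ u ≠ ψ v) (a b : Fin m × Fin m → Bool) :
    ∫ x, gProd W (pairsF m) a (x ∘ φ) * gProd W (pairsF m) b (x ∘ ψ) ∂(cubeMeasure n)
      = (∫ y, gProd W (pairsF m) a y ∂(cubeMeasure m)) *
        (∫ y, gProd W (pairsF m) b y ∂(cubeMeasure m)) := by
  set χ : Fin m ⊕ Fin m → Fin n := Sum.elim (fun i => φ i) (fun i => ψ i) with hχdef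
  have hχ : Function.Injective χ := by
    intro i j h
    cases i with
    | inl i => cases j with
      | inl j => simp only [χ, Sum.elim_inl] at h; rw [φ.injective h]
      | inr j => exact absurd h (hd i j)
    | inr i => cases j with
      | inl j => exact absurd h.symm (hd j i)
      | inr j => simp only [χ, Sum.elim_inr] at h; rw [ψ.injective h]
  have hmeas : Measurable (fun x : Fin n → ℝ => x ∘ χ) :=
    measurable_pi_lambda _ (fun i => measurable_pi_apply (χ i))
  have hmap := map_comp_inj χ hχ
  have hGmeas : Measurable (fun y : Fin m ⊕ Fin m → ℝ =>
      gProd W (pairsF m) a (y ∘ Sum.inl) * gProd W (pairsF m) b (y ∘ Sum.inr)) := by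
    apply Measurable.mul
    · exact (measurable_gProd hW.1 _ a).comp
        (measurable_pi_lambda _ fun i => measurable_pi_apply _)
    · exact (measurable_gProd hW.1 _ b).comp
        (measurable_pi_lambda _ fun i => measurable_pi_apply _)
  have step1 : ∫ x, gProd W (pairsF m) a (x ∘ φ) * gProd W (pairsF m) b (x ∘ ψ) ∂(cubeMeasure n)
      = ∫ y, gProd W (pairsF m) a (y ∘ Sum.inl) * gProd W (pairsF m) b (y ∘ Sum.inr)
          ∂(Measure.pi fun _ : Fin m ⊕ Fin m => nu) := by
    rw [← hmap, integral_map hmeas.aemeasurable hGmeas.aestronglyMeasurable]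
    rfl
  rw [step1]
  have hmp := measurePreserving_sumPiEquivProdPi (fun _ : Fin m ⊕ Fin m => nu)
  have step2 : ∫ y, gProd W (pairsF m) a (y ∘ Sum.inl) * gProd W (pairsF m) b (y ∘ Sum.inr)
          ∂(Measure.pi fun _ : Fin m ⊕ Fin m => nu)
      = ∫ z : (Fin m → ℝ) × (Fin m → ℝ), gProd W (pairsF m) a z.1 * gProd W (pairsF m) b z.2
          ∂((cubeMeasure m).prod (cubeMeasure m)) := by
    have hcube : ((cubeMeasure m).prod (cubeMeasure m))
        = ((Measure.pi fun _ : Fin m => nu).prod (Measure.pi fun _ : Fin m => nu)) := rfl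
    rw [hcube, ← hmp.map_eq, integral_map hmp.measurable.aemeasurable]
    · rfl
    · exact (((measurable_gProd hW.1 _ a).comp measurable_fst).mul
        ((measurable_gProd hW.1 _ b).comp measurable_snd)).aestronglyMeasurable
  rw [step2, integral_prod_mul]

lemma sum_tIndW_phi {W : ℝ → ℝ → ℝ} (hW : IsGraphon W) (φ : Fin m ↪ Fin n)
    (F : SimpleGraph (Fin m)) :
    ∑ H : SimpleGraph (Fin n), (if ∀ u v, H.Adj (φ u) (φ v) ↔ F.Adj u v then tIndW H W else 0)
      = tIndW F W := by
  have hterm : ∀ H : SimpleGraph (Fin n),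
      (if ∀ u v, H.Adj (φ u) (φ v) ↔ F.Adj u v then tIndW H W else 0)
      = ∫ x, (if ∀ p ∈ Tset φ, decide (H.Adj p.1 p.2) = aLab φ F p
          then gProd W (pairsF n) (fun p => decide (H.Adj p.1 p.2)) x else 0)
          ∂(cubeMeasure n) := by
    intro H
    by_cases hc : ∀ u v, H.Adj (φ u) (φ v) ↔ F.Adj u v
    · rw [if_pos hc, tIndW_eq]
      exact integral_congr_ae (Filter.Eventually.of_forall fun x =>
        (if_pos ((constraint_iff φ F H).mpr hc)).symm)
    · rw [if_neg hc]
      have hnc : ¬ ∀ p ∈ Tset φ, decide (H.Adj p.1 p.2) = aLab φ F p :=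
        fun h => hc ((constraint_iff φ F H).mp h)
      simp only [if_neg hnc, integral_zero]
  rw [Finset.sum_congr rfl (fun H _ => hterm H), ← integral_finset_sum]
  · have hpt : ∀ x : Fin n → ℝ,
        (∑ H : SimpleGraph (Fin n), if ∀ p ∈ Tset φ, decide (H.Adj p.1 p.2) = aLab φ F p
          then gProd W (pairsF n) (fun p => decide (H.Adj p.1 p.2)) x else 0)
        = gProd W (pairsF m) (fun s => decide (F.Adj s.1 s.2)) (x ∘ φ) := by
      intro x
      have h1 : ∀ p ∈ pairsF n,
          (if (true : Bool) then W (x p.1) (x p.2) else 1 - W (x p.1) (x p.2)) +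
          (if (false : Bool) then W (x p.1) (x p.2) else 1 - W (x p.1) (x p.2)) = 1 := by
        intro p _; simp
      have hsg := sum_graphs n
        (fun p bb => if bb then W (x p.1) (x p.2) else 1 - W (x p.1) (x p.2)) h1
        (Tset φ) (Tset_subset φ) (aLab φ F)
      calc (∑ H : SimpleGraph (Fin n), if ∀ p ∈ Tset φ, decide (H.Adj p.1 p.2) = aLab φ F p
          then gProd W (pairsF n) (fun p => decide (H.Adj p.1 p.2)) x else 0)
          = ∏ p ∈ Tset φ, (if aLab φ F p then W (x p.1) (x p.2) else 1 - W (x p.1) (x p.2)) := by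
            simpa only [gProd] using hsg
        _ = gProd W (pairsF m) (fun s => decide (F.Adj s.1 s.2)) (x ∘ φ) :=
            prod_Tset W hW.2.1 φ F x
    simp only [hpt]
    rw [integral_gProd_comp hW φ _, ← tIndW_eq]
  · intro H _
    by_cases hc : ∀ p ∈ Tset φ, decide (H.Adj p.1 p.2) = aLab φ F p
    · simp only [if_pos hc]; exact integrable_gProd hW _ _
    · simp only [if_neg hc]; exact integrable_zero _ _ _

lemma Tset_disjoint (φ ψ : Fin m ↪ Fin n) (hd : ∀ u v, φ u ≠ ψ v) :
    Disjoint (Tset φ) (Tset ψ) := by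
  rw [Finset.disjoint_left]
  intro p hpφ hpψ
  obtain ⟨u, hu⟩ := mem_Tset_fst hpφ
  obtain ⟨v, hv⟩ := mem_Tset_fst hpψ
  exact hd u v (hu.trans hv.symm)

lemma aLab2_phi (φ ψ : Fin m ↪ Fin n) (hd : ∀ u v, φ u ≠ ψ v) (F : SimpleGraph (Fin m))
    {p : Fin n × Fin n} (hp : p ∈ Tset φ) : (aLab φ F p || aLab ψ F p) = aLab φ F p := by
  obtain ⟨u0, hu0⟩ := mem_Tset_fst hp
  have : aLab ψ F p = false := aLab_false ψ F (fun u hu => hd u0 u (hu0.trans hu.symm))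
  rw [this, Bool.or_false]

lemma aLab2_psi (φ ψ : Fin m ↪ Fin n) (hd : ∀ u v, φ u ≠ ψ v) (F : SimpleGraph (Fin m))
    {p : Fin n × Fin n} (hp : p ∈ Tset ψ) : (aLab φ F p || aLab ψ F p) = aLab ψ F p := by
  obtain ⟨u0, hu0⟩ := mem_Tset_fst hp
  have : aLab φ F p = false := aLab_false φ F (fun u hu => hd u u0 (hu.trans hu0.symm))
  rw [this, Bool.false_or]

lemma constraint2_iff (φ ψ : Fin m ↪ Fin n) (hd : ∀ u v, φ u ≠ ψ v) (F : SimpleGraph (Fin m))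
    (H : SimpleGraph (Fin n)) :
    (∀ p ∈ Tset φ ∪ Tset ψ, decide (H.Adj p.1 p.2) = (aLab φ F p || aLab ψ F p)) ↔
    ((∀ u v, H.Adj (φ u) (φ v) ↔ F.Adj u v) ∧ (∀ u v, H.Adj (ψ u) (ψ v) ↔ F.Adj u v)) := by
  rw [Finset.forall_mem_union]
  have e1 : (∀ p ∈ Tset φ, decide (H.Adj p.1 p.2) = (aLab φ F p || aLab ψ F p)) ↔
      (∀ p ∈ Tset φ, decide (H.Adj p.1 p.2) = aLab φ F p) :=
    forall₂_congr fun p hp => by rw [aLab2_phi φ ψ hd F hp]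
  have e2 : (∀ p ∈ Tset ψ, decide (H.Adj p.1 p.2) = (aLab φ F p || aLab ψ F p)) ↔
      (∀ p ∈ Tset ψ, decide (H.Adj p.1 p.2) = aLab ψ F p) :=
    forall₂_congr fun p hp => by rw [aLab2_psi φ ψ hd F hp]
  rw [e1, e2, constraint_iff, constraint_iff]

lemma sum_tIndW_two {W : ℝ → ℝ → ℝ} (hW : IsGraphon W) (φ ψ : Fin m ↪ Fin n)
    (hd : ∀ u v, φ u ≠ ψ v) (F : SimpleGraph (Fin m)) :
    ∑ H : SimpleGraph (Fin n),
      (if (∀ u v, H.Adj (φ u) (φ v) ↔ F.Adj u v) ∧ (∀ u v, H.Adj (ψ u) (ψ v) ↔ F.Adj u v)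
        then tIndW H W else 0)
      = tIndW F W * tIndW F W := by
  have hterm : ∀ H : SimpleGraph (Fin n),
      (if (∀ u v, H.Adj (φ u) (φ v) ↔ F.Adj u v) ∧ (∀ u v, H.Adj (ψ u) (ψ v) ↔ F.Adj u v)
        then tIndW H W else 0)
      = ∫ x, (if ∀ p ∈ Tset φ ∪ Tset ψ, decide (H.Adj p.1 p.2) = (aLab φ F p || aLab ψ F p)
          then gProd W (pairsF n) (fun p => decide (H.Adj p.1 p.2)) x else 0)
          ∂(cubeMeasure n) := by
    intro H
    by_cases hc : (∀ u v, H.Adj (φ u) (φ v) ↔ F.Adj u v) ∧ (∀ u v, H.Adj (ψ u) (ψ v) ↔ F.Adj u v)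
    · rw [if_pos hc, tIndW_eq]
      exact integral_congr_ae (Filter.Eventually.of_forall fun x =>
        (if_pos ((constraint2_iff φ ψ hd F H).mpr hc)).symm)
    · rw [if_neg hc]
      have hnc : ¬ ∀ p ∈ Tset φ ∪ Tset ψ, decide (H.Adj p.1 p.2) = (aLab φ F p || aLab ψ F p) :=
        fun h => hc ((constraint2_iff φ ψ hd F H).mp h)
      simp only [if_neg hnc, integral_zero]
  rw [Finset.sum_congr rfl (fun H _ => hterm H), ← integral_finset_sum]
  · have hpt : ∀ x : Fin n → ℝ,
        (∑ H : SimpleGraph (Fin n),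
          if ∀ p ∈ Tset φ ∪ Tset ψ, decide (H.Adj p.1 p.2) = (aLab φ F p || aLab ψ F p)
          then gProd W (pairsF n) (fun p => decide (H.Adj p.1 p.2)) x else 0)
        = gProd W (pairsF m) (fun s => decide (F.Adj s.1 s.2)) (x ∘ φ) *
          gProd W (pairsF m) (fun s => decide (F.Adj s.1 s.2)) (x ∘ ψ) := by
      intro x
      have h1 : ∀ p ∈ pairsF n,
          (if (true : Bool) then W (x p.1) (x p.2) else 1 - W (x p.1) (x p.2)) +
          (if (false : Bool) then W (x p.1) (x p.2) else 1 - W (x p.1) (x p.2)) = 1 := by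
        intro p _; simp
      have hsg := sum_graphs n
        (fun p bb => if bb then W (x p.1) (x p.2) else 1 - W (x p.1) (x p.2)) h1
        (Tset φ ∪ Tset ψ) (Finset.union_subset (Tset_subset φ) (Tset_subset ψ))
        (fun p => aLab φ F p || aLab ψ F p)
      calc (∑ H : SimpleGraph (Fin n),
          if ∀ p ∈ Tset φ ∪ Tset ψ, decide (H.Adj p.1 p.2) = (aLab φ F p || aLab ψ F p)
          then gProd W (pairsF n) (fun p => decide (H.Adj p.1 p.2)) x else 0)
          = ∏ p ∈ Tset φ ∪ Tset ψ, (if (aLab φ F p || aLab ψ F p) then W (x p.1) (x p.2)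
              else 1 - W (x p.1) (x p.2)) := by
            simpa only [gProd] using hsg
        _ = (∏ p ∈ Tset φ, (if (aLab φ F p || aLab ψ F p) then W (x p.1) (x p.2)
              else 1 - W (x p.1) (x p.2))) *
            (∏ p ∈ Tset ψ, (if (aLab φ F p || aLab ψ F p) then W (x p.1) (x p.2)
              else 1 - W (x p.1) (x p.2))) :=
            Finset.prod_union (Tset_disjoint φ ψ hd)
        _ = gProd W (pairsF m) (fun s => decide (F.Adj s.1 s.2)) (x ∘ φ) *
            gProd W (pairsF m) (fun s => decide (F.Adj s.1 s.2)) (x ∘ ψ) := by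
            congr 1
            · rw [← prod_Tset W hW.2.1 φ F x]
              exact Finset.prod_congr rfl (fun p hp => by rw [aLab2_phi φ ψ hd F hp])
            · rw [← prod_Tset W hW.2.1 ψ F x]
              exact Finset.prod_congr rfl (fun p hp => by rw [aLab2_psi φ ψ hd F hp])
    simp only [hpt]
    rw [integral_gProd_comp_two hW φ ψ hd, ← tIndW_eq]
  · intro H _
    by_cases hc : ∀ p ∈ Tset φ ∪ Tset ψ, decide (H.Adj p.1 p.2) = (aLab φ F p || aLab ψ F p)
    · simp only [if_pos hc]; exact integrable_gProd hW _ _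
    · simp only [if_neg hc]; exact integrable_zero _ _ _



lemma sum_tIndW_one {W : ℝ → ℝ → ℝ} (hW : IsGraphon W) (n : ℕ) :
    ∑ H : SimpleGraph (Fin n), tIndW H W = 1 := by
  have φ : Fin 0 ↪ Fin n := ⟨Fin.elim0, fun {x} => x.elim0⟩
  have h := sum_tIndW_phi hW φ (⊥ : SimpleGraph (Fin 0))
  have hvac : ∀ H : SimpleGraph (Fin n),
      (∀ u v : Fin 0, H.Adj (φ u) (φ v) ↔ (⊥ : SimpleGraph (Fin 0)).Adj u v) := by
    intro H u; exact u.elim0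
  rw [Finset.sum_congr rfl (fun H _ => if_pos (hvac H))] at h
  rw [h, tIndW]
  have : (Finset.univ.filter (fun p : Fin 0 × Fin 0 => p.1 < p.2)) = ∅ := by
    apply Finset.eq_empty_of_forall_notMem; intro p; exact p.1.elim0
  rw [this]
  simp

lemma tIndG_cast {m n : ℕ} (F : SimpleGraph (Fin m)) (H : SimpleGraph (Fin n)) :
    tIndG F H = (∑ φ : Fin m ↪ Fin n,
      if (∀ u v, H.Adj (φ u) (φ v) ↔ F.Adj u v) then (1:ℝ) else 0) / (n.descFactorial m : ℝ) := by
  rw [tIndG, Finset.card_filter]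
  congr 1
  push_cast
  rfl

lemma card_embeddings (m n : ℕ) : Fintype.card (Fin m ↪ Fin n) = n.descFactorial m := by
  rw [Fintype.card_embedding_eq, Fintype.card_fin, Fintype.card_fin]

lemma descFactorial_pos' {m n : ℕ} (h : m ≤ n) : (0:ℝ) < (n.descFactorial m : ℝ) := by
  have : n.descFactorial m ≠ 0 := fun hz =>
    absurd (Nat.descFactorial_eq_zero_iff_lt.mp hz) (not_lt.mpr h)
  exact_mod_cast Nat.pos_of_ne_zero this

lemma first_moment {W : ℝ → ℝ → ℝ} (hW : IsGraphon W) {m n : ℕ} (h : m ≤ n)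
    (F : SimpleGraph (Fin m)) :
    ∑ H : SimpleGraph (Fin n), tIndG F H * tIndW H W = tIndW F W := by
  have hd : (0:ℝ) < (n.descFactorial m : ℝ) := descFactorial_pos' h
  calc ∑ H : SimpleGraph (Fin n), tIndG F H * tIndW H W
      = ∑ H : SimpleGraph (Fin n), (∑ φ : Fin m ↪ Fin n,
          (if (∀ u v, H.Adj (φ u) (φ v) ↔ F.Adj u v) then (1:ℝ) else 0) * tIndW H W)
          / (n.descFactorial m : ℝ) := by
        refine Finset.sum_congr rfl fun H _ => ?_
        rw [tIndG_cast, div_mul_eq_mul_div, Finset.sum_mul]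
    _ = (∑ φ : Fin m ↪ Fin n, ∑ H : SimpleGraph (Fin n),
          (if (∀ u v, H.Adj (φ u) (φ v) ↔ F.Adj u v) then (1:ℝ) else 0) * tIndW H W)
          / (n.descFactorial m : ℝ) := by
        rw [← Finset.sum_div, Finset.sum_comm]
    _ = (∑ _φ : Fin m ↪ Fin n, tIndW F W) / (n.descFactorial m : ℝ) := by
        congr 1
        refine Finset.sum_congr rfl fun φ _ => ?_
        rw [← sum_tIndW_phi hW φ F]
        exact Finset.sum_congr rfl fun H _ => by rw [ite_mul, one_mul, zero_mul]
    _ = tIndW F W := by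
        rw [Finset.sum_const, Finset.card_univ, card_embeddings, nsmul_eq_mul]
        field_simp

lemma card_fiber_mul {m n : ℕ} (b : Fin m) (c : Fin n) :
    (Finset.univ.filter fun ψ : Fin m ↪ Fin n => ψ b = c).card * n = n.descFactorial m := by
  have hall : ∀ c' : Fin n, (Finset.univ.filter fun ψ : Fin m ↪ Fin n => ψ b = c').card
      = (Finset.univ.filter fun ψ : Fin m ↪ Fin n => ψ b = c).card := by
    intro c'
    apply Finset.card_bij (fun ψ _ => ψ.trans (Equiv.swap c' c).toEmbedding)
    · intro ψ hψ
      rw [Finset.mem_filter] at hψ ⊢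
      refine ⟨Finset.mem_univ _, ?_⟩
      rw [Function.Embedding.trans_apply, hψ.2, Equiv.coe_toEmbedding, Equiv.swap_apply_left]
    · intro ψ1 _ ψ2 _ heq
      apply DFunLike.ext
      intro u
      exact (Equiv.swap c' c).injective (DFunLike.congr_fun heq u)
    · intro ψ' hψ'
      rw [Finset.mem_filter] at hψ'
      refine ⟨ψ'.trans (Equiv.swap c' c).toEmbedding, ?_, ?_⟩
      · rw [Finset.mem_filter]
        refine ⟨Finset.mem_univ _, ?_⟩
        rw [Function.Embedding.trans_apply, hψ'.2, Equiv.coe_toEmbedding,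
          Equiv.swap_apply_right]
      · ext u
        simp [Equiv.swap_apply_self]
  have hsum := Finset.card_eq_sum_card_fiberwise
    (f := fun ψ : Fin m ↪ Fin n => ψ b) (s := Finset.univ) (t := Finset.univ)
    (fun x _ => Finset.mem_univ _)
  rw [Finset.card_univ, card_embeddings] at hsum
  rw [Finset.sum_congr rfl (fun c' _ => hall c'), Finset.sum_const, Finset.card_univ,
    Fintype.card_fin, smul_eq_mul] at hsum
  rw [mul_comm]
  exact hsum.symm

lemma second_moment {W : ℝ → ℝ → ℝ} (hW : IsGraphon W) {m n : ℕ} (hn : 0 < n)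
    (F : SimpleGraph (Fin m)) :
    ∑ H : SimpleGraph (Fin n), tIndG F H ^ 2 * tIndW H W
      ≤ tIndW F W ^ 2 + (m:ℝ)^2 / n := by
  have hnR : (0:ℝ) < (n:ℝ) := by exact_mod_cast hn
  by_cases hmn : m ≤ n
  swap
  · have hz : ∀ H : SimpleGraph (Fin n), tIndG F H = 0 := by
      intro H
      rw [tIndG, Nat.descFactorial_eq_zero_iff_lt.mpr (lt_of_not_ge hmn)]
      simp
    simp only [hz]
    have h1 : (0:ℝ) ≤ tIndW F W ^ 2 + (m:ℝ)^2 / n := by positivity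
    simpa using h1
  have hd : (0:ℝ) < (n.descFactorial m : ℝ) := descFactorial_pos' hmn
  set d : ℝ := (n.descFactorial m : ℝ) with hddef
  -- rewrite LHS as double sum over pairs of embeddings
  have hsq : ∀ H : SimpleGraph (Fin n), tIndG F H ^ 2 * tIndW H W
      = (∑ φ : Fin m ↪ Fin n, ∑ ψ : Fin m ↪ Fin n,
          (if (∀ u v, H.Adj (φ u) (φ v) ↔ F.Adj u v) ∧ (∀ u v, H.Adj (ψ u) (ψ v) ↔ F.Adj u v)
            then tIndW H W else 0)) / d ^ 2 := by
    intro H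
    rw [tIndG_cast]
    rw [div_pow, div_mul_eq_mul_div]
    congr 1
    rw [sq, Finset.sum_mul_sum]
    rw [Finset.sum_mul]
    refine Finset.sum_congr rfl fun φ _ => ?_
    rw [Finset.sum_mul]
    refine Finset.sum_congr rfl fun ψ _ => ?_
    by_cases h1 : ∀ u v, H.Adj (φ u) (φ v) ↔ F.Adj u v <;>
      by_cases h2 : ∀ u v, H.Adj (ψ u) (ψ v) ↔ F.Adj u v <;>
      simp [h1, h2]
  rw [Finset.sum_congr rfl (fun H _ => hsq H), ← Finset.sum_div, Finset.sum_comm,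
    Finset.sum_congr rfl (fun φ _ => Finset.sum_comm)]
  -- now a sum over φ of sums over ψ of S φ ψ
  have hS_nonneg : ∀ (φ ψ : Fin m ↪ Fin n), (0:ℝ) ≤ ∑ H : SimpleGraph (Fin n),
      (if (∀ u v, H.Adj (φ u) (φ v) ↔ F.Adj u v) ∧ (∀ u v, H.Adj (ψ u) (ψ v) ↔ F.Adj u v)
        then tIndW H W else 0) := by
    intro φ ψ
    apply Finset.sum_nonneg
    intro H _
    by_cases hc : (∀ u v, H.Adj (φ u) (φ v) ↔ F.Adj u v) ∧
        (∀ u v, H.Adj (ψ u) (ψ v) ↔ F.Adj u v)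
    · rw [if_pos hc]; exact tIndW_nonneg hW H
    · rw [if_neg hc]
  have hS_le_one : ∀ (φ ψ : Fin m ↪ Fin n), (∑ H : SimpleGraph (Fin n),
      (if (∀ u v, H.Adj (φ u) (φ v) ↔ F.Adj u v) ∧ (∀ u v, H.Adj (ψ u) (ψ v) ↔ F.Adj u v)
        then tIndW H W else 0)) ≤ 1 := by
    intro φ ψ
    rw [← sum_tIndW_one hW n]
    apply Finset.sum_le_sum
    intro H _
    by_cases hc : (∀ u v, H.Adj (φ u) (φ v) ↔ F.Adj u v) ∧
        (∀ u v, H.Adj (ψ u) (ψ v) ↔ F.Adj u v)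
    · rw [if_pos hc]
    · rw [if_neg hc]; exact tIndW_nonneg hW H
  -- split pairs into disjoint-range pairs and the rest
  set Q := (Finset.univ : Finset ((Fin m ↪ Fin n) × (Fin m ↪ Fin n))) with hQ
  have hsum2 : ∑ φ : Fin m ↪ Fin n, ∑ ψ : Fin m ↪ Fin n, (∑ H : SimpleGraph (Fin n),
      (if (∀ u v, H.Adj (φ u) (φ v) ↔ F.Adj u v) ∧ (∀ u v, H.Adj (ψ u) (ψ v) ↔ F.Adj u v)
        then tIndW H W else 0))
      = ∑ q ∈ Q, (∑ H : SimpleGraph (Fin n),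
      (if (∀ u v, H.Adj (q.1 u) (q.1 v) ↔ F.Adj u v) ∧ (∀ u v, H.Adj (q.2 u) (q.2 v) ↔ F.Adj u v)
        then tIndW H W else 0)) := by
    rw [hQ, ← Finset.univ_product_univ, Finset.sum_product]
  rw [hsum2]
  set Dgood := Q.filter (fun q : (Fin m ↪ Fin n) × (Fin m ↪ Fin n) => ∀ u v, q.1 u ≠ q.2 v)
    with hDgood
  have hsplit := (Finset.sum_filter_add_sum_filter_not Q
    (fun q : (Fin m ↪ Fin n) × (Fin m ↪ Fin n) => ∀ u v, q.1 u ≠ q.2 v)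
    (fun q => ∑ H : SimpleGraph (Fin n),
      (if (∀ u v, H.Adj (q.1 u) (q.1 v) ↔ F.Adj u v) ∧ (∀ u v, H.Adj (q.2 u) (q.2 v) ↔ F.Adj u v)
        then tIndW H W else 0))).symm
  rw [hsplit]
  -- good part
  have hgood : ∑ q ∈ Q.filter (fun q : (Fin m ↪ Fin n) × (Fin m ↪ Fin n) => ∀ u v, q.1 u ≠ q.2 v),
      (∑ H : SimpleGraph (Fin n),
      (if (∀ u v, H.Adj (q.1 u) (q.1 v) ↔ F.Adj u v) ∧ (∀ u v, H.Adj (q.2 u) (q.2 v) ↔ F.Adj u v)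
        then tIndW H W else 0)) ≤ d^2 * (tIndW F W * tIndW F W) := by
    have heach : ∀ q ∈ Q.filter (fun q : (Fin m ↪ Fin n) × (Fin m ↪ Fin n) =>
        ∀ u v, q.1 u ≠ q.2 v), (∑ H : SimpleGraph (Fin n),
        (if (∀ u v, H.Adj (q.1 u) (q.1 v) ↔ F.Adj u v) ∧ (∀ u v, H.Adj (q.2 u) (q.2 v) ↔ F.Adj u v)
          then tIndW H W else 0)) = tIndW F W * tIndW F W := by
      intro q hq
      rw [Finset.mem_filter] at hq
      exact sum_tIndW_two hW q.1 q.2 hq.2 F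
    rw [Finset.sum_congr rfl heach, Finset.sum_const, nsmul_eq_mul]
    apply mul_le_mul_of_nonneg_right
    · have hcard : (Q.filter (fun q : (Fin m ↪ Fin n) × (Fin m ↪ Fin n) =>
          ∀ u v, q.1 u ≠ q.2 v)).card ≤ Q.card := Finset.card_filter_le _ _
      have hQcard : (Q.card : ℝ) = d^2 := by
        rw [hQ, Finset.card_univ, Fintype.card_prod, card_embeddings]
        push_cast
        ring
      calc ((Q.filter _).card : ℝ) ≤ (Q.card : ℝ) := by exact_mod_cast hcard
        _ = d^2 := hQcard
    · have h0 := tIndW_nonneg hW F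
      positivity
  -- bad part
  have hbadcard : ((Q.filter (fun q : (Fin m ↪ Fin n) × (Fin m ↪ Fin n) =>
      ¬ ∀ u v, q.1 u ≠ q.2 v)).card : ℝ) ≤ (m:ℝ)^2 * d^2 / n := by
    have hsub : Q.filter (fun q : (Fin m ↪ Fin n) × (Fin m ↪ Fin n) =>
        ¬ ∀ u v, q.1 u ≠ q.2 v) ⊆
        (Finset.univ : Finset (Fin m × Fin m)).biUnion
          (fun ab => Q.filter (fun q : (Fin m ↪ Fin n) × (Fin m ↪ Fin n) =>
            q.1 ab.1 = q.2 ab.2)) := by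
      intro q hq
      rw [Finset.mem_filter] at hq
      push_neg at hq
      obtain ⟨_, u, v, huv⟩ := hq
      rw [Finset.mem_biUnion]
      exact ⟨(u, v), Finset.mem_univ _, Finset.mem_filter.mpr ⟨Finset.mem_univ _, huv⟩⟩
    have hcard1 := Finset.card_le_card hsub
    have hcard2 := Finset.card_biUnion_le (s := (Finset.univ : Finset (Fin m × Fin m)))
      (t := fun ab => Q.filter (fun q : (Fin m ↪ Fin n) × (Fin m ↪ Fin n) =>
        q.1 ab.1 = q.2 ab.2))
    have hfib : ∀ ab : Fin m × Fin m, ((Q.filter (fun q : (Fin m ↪ Fin n) × (Fin m ↪ Fin n) =>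
        q.1 ab.1 = q.2 ab.2)).card : ℝ) = d^2 / n := by
      intro ab
      have : (Q.filter (fun q : (Fin m ↪ Fin n) × (Fin m ↪ Fin n) =>
          q.1 ab.1 = q.2 ab.2)).card
          = ∑ φ : Fin m ↪ Fin n,
            (Finset.univ.filter fun ψ : Fin m ↪ Fin n => ψ ab.2 = φ ab.1).card := by
        rw [Finset.card_filter, hQ, Fintype.sum_prod_type]
        refine Finset.sum_congr rfl fun φ _ => ?_
        rw [Finset.card_filter]
        refine Finset.sum_congr rfl fun ψ _ => ?_
        by_cases hc : φ ab.1 = ψ ab.2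
        · rw [if_pos hc, if_pos hc.symm]
        · rw [if_neg hc, if_neg (fun hcc => hc hcc.symm)]
      rw [this]
      push_cast
      have heach : ∀ φ : Fin m ↪ Fin n,
          ((Finset.univ.filter fun ψ : Fin m ↪ Fin n => ψ ab.2 = φ ab.1).card : ℝ) = d / n := by
        intro φ
        have := card_fiber_mul (n := n) ab.2 (φ ab.1)
        have hcast : ((Finset.univ.filter fun ψ : Fin m ↪ Fin n =>
            ψ ab.2 = φ ab.1).card : ℝ) * n = d := by rw [hddef]; exact_mod_cast this
        field_simp at hcast ⊢
        linarith
      rw [Finset.sum_congr rfl (fun φ _ => heach φ), Finset.sum_const, Finset.card_univ,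
        card_embeddings, nsmul_eq_mul]
      rw [← hddef]
      ring
    calc ((Q.filter (fun q : (Fin m ↪ Fin n) × (Fin m ↪ Fin n) =>
          ¬ ∀ u v, q.1 u ≠ q.2 v)).card : ℝ)
        ≤ (((Finset.univ : Finset (Fin m × Fin m)).biUnion
          (fun ab => Q.filter (fun q : (Fin m ↪ Fin n) × (Fin m ↪ Fin n) =>
            q.1 ab.1 = q.2 ab.2))).card : ℝ) := by exact_mod_cast hcard1
      _ ≤ ∑ ab : Fin m × Fin m, ((Q.filter (fun q : (Fin m ↪ Fin n) × (Fin m ↪ Fin n) =>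
            q.1 ab.1 = q.2 ab.2)).card : ℝ) := by exact_mod_cast hcard2
      _ = ∑ _ab : Fin m × Fin m, d^2 / n := Finset.sum_congr rfl (fun ab _ => hfib ab)
      _ = (m:ℝ)^2 * d^2 / n := by
          rw [Finset.sum_const, Finset.card_univ, Fintype.card_prod, Fintype.card_fin,
            nsmul_eq_mul]
          push_cast
          ring
  have hbad : ∑ q ∈ Q.filter (fun q : (Fin m ↪ Fin n) × (Fin m ↪ Fin n) =>
      ¬ ∀ u v, q.1 u ≠ q.2 v), (∑ H : SimpleGraph (Fin n),
      (if (∀ u v, H.Adj (q.1 u) (q.1 v) ↔ F.Adj u v) ∧ (∀ u v, H.Adj (q.2 u) (q.2 v) ↔ F.Adj u v)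
        then tIndW H W else 0)) ≤ (m:ℝ)^2 * d^2 / n := by
    calc ∑ q ∈ Q.filter (fun q : (Fin m ↪ Fin n) × (Fin m ↪ Fin n) =>
        ¬ ∀ u v, q.1 u ≠ q.2 v), (∑ H : SimpleGraph (Fin n),
        (if (∀ u v, H.Adj (q.1 u) (q.1 v) ↔ F.Adj u v) ∧
          (∀ u v, H.Adj (q.2 u) (q.2 v) ↔ F.Adj u v) then tIndW H W else 0))
        ≤ ∑ _q ∈ Q.filter (fun q : (Fin m ↪ Fin n) × (Fin m ↪ Fin n) =>
          ¬ ∀ u v, q.1 u ≠ q.2 v), (1:ℝ) :=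
          Finset.sum_le_sum (fun q _ => hS_le_one q.1 q.2)
      _ = ((Q.filter (fun q : (Fin m ↪ Fin n) × (Fin m ↪ Fin n) =>
          ¬ ∀ u v, q.1 u ≠ q.2 v)).card : ℝ) := by rw [Finset.sum_const, nsmul_eq_mul, mul_one]
      _ ≤ (m:ℝ)^2 * d^2 / n := hbadcard
  have hdd : (0:ℝ) < d^2 := by positivity
  rw [div_le_iff₀ hdd]
  have hexp : (tIndW F W ^ 2 + (m:ℝ)^2 / n) * d^2
      = d^2 * (tIndW F W * tIndW F W) + (m:ℝ)^2 * d^2 / n := by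
    field_simp
  rw [hexp]
  exact add_le_add hgood hbad


lemma tIndG_nonneg {m n : ℕ} (F : SimpleGraph (Fin m)) (G : SimpleGraph (Fin n)) :
    0 ≤ tIndG F G := by
  rw [tIndG]
  positivity

lemma cheb {W : ℝ → ℝ → ℝ} (hW : IsGraphon W) {m n : ℕ} (h : m ≤ n) (hn : 0 < n)
    (F : SimpleGraph (Fin m)) {δ : ℝ} (hδ : 0 < δ) :
    ∑ H ∈ Finset.univ.filter (fun H : SimpleGraph (Fin n) => δ < |tIndG F H - tIndW F W|),
      tIndW H W ≤ ((m:ℝ)^2 / n) / δ^2 := by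
  have hδ2 : (0:ℝ) < δ^2 := by positivity
  have hvar : ∑ H : SimpleGraph (Fin n), (tIndG F H - tIndW F W)^2 * tIndW H W
      ≤ (m:ℝ)^2 / n := by
    have h1 := second_moment hW hn F
    have h2 := first_moment hW h F
    have h3 := sum_tIndW_one hW n
    calc ∑ H : SimpleGraph (Fin n), (tIndG F H - tIndW F W)^2 * tIndW H W
        = (∑ H : SimpleGraph (Fin n), tIndG F H ^ 2 * tIndW H W)
          - (2 * tIndW F W) * (∑ H : SimpleGraph (Fin n), tIndG F H * tIndW H W)
          + (tIndW F W ^ 2) * (∑ H : SimpleGraph (Fin n), tIndW H W) := by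
          rw [Finset.mul_sum, Finset.mul_sum, ← Finset.sum_sub_distrib,
            ← Finset.sum_add_distrib]
          exact Finset.sum_congr rfl fun H _ => by ring
      _ ≤ (tIndW F W ^ 2 + (m:ℝ)^2 / n) - (2 * tIndW F W) * tIndW F W
          + (tIndW F W ^ 2) * 1 := by
          rw [h2, h3]
          linarith [h1]
      _ = (m:ℝ)^2 / n := by ring
  calc ∑ H ∈ Finset.univ.filter (fun H : SimpleGraph (Fin n) => δ < |tIndG F H - tIndW F W|),
        tIndW H W
      ≤ ∑ H ∈ Finset.univ.filter (fun H : SimpleGraph (Fin n) => δ < |tIndG F H - tIndW F W|),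
        ((tIndG F H - tIndW F W)^2 * tIndW H W) / δ^2 := by
        apply Finset.sum_le_sum
        intro H hH
        rw [Finset.mem_filter] at hH
        have hb : δ^2 < (tIndG F H - tIndW F W)^2 := by
          rw [← sq_abs (tIndG F H - tIndW F W)]
          exact pow_lt_pow_left₀ hH.2 hδ.le (two_ne_zero)
        have hp := tIndW_nonneg hW H
        have : tIndW H W ≤ ((tIndG F H - tIndW F W)^2 / δ^2) * tIndW H W := by
          apply le_mul_of_one_le_left hp
          rw [le_div_iff₀ hδ2, one_mul]
          exact hb.le
        calc tIndW H W ≤ ((tIndG F H - tIndW F W)^2 / δ^2) * tIndW H W := this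
          _ = ((tIndG F H - tIndW F W)^2 * tIndW H W) / δ^2 := by ring
    _ ≤ (∑ H : SimpleGraph (Fin n), ((tIndG F H - tIndW F W)^2 * tIndW H W)) / δ^2 := by
        rw [← Finset.sum_div]
        apply (div_le_div_iff_of_pos_right hδ2).mpr
        apply Finset.sum_le_sum_of_subset_of_nonneg (Finset.filter_subset _ _)
        intro H _ _
        exact mul_nonneg (sq_nonneg _) (tIndW_nonneg hW H)
    _ ≤ ((m:ℝ)^2 / n) / δ^2 := (div_le_div_iff_of_pos_right hδ2).mpr hvar


lemma exists_pos_tIndW {W : ℝ → ℝ → ℝ} (hW : IsGraphon W) (n : ℕ) :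
    ∃ H : SimpleGraph (Fin n), 0 < tIndW H W := by
  by_contra hc
  push_neg at hc
  have h1 := sum_tIndW_one hW n
  have h2 : ∑ H : SimpleGraph (Fin n), tIndW H W ≤ 0 :=
    Finset.sum_nonpos (fun H _ => hc H)
  linarith

lemma exists_good {W : ℝ → ℝ → ℝ} (hW : IsGraphon W) (s n : ℕ) (hn : 0 < n) (hs : s ≤ n)
    {δ : ℝ} (hδ : 0 < δ)
    (hsmall : (∑ m ∈ Finset.range (s+1),
      (Fintype.card (SimpleGraph (Fin m)) : ℝ) * (((m:ℝ)^2 / n) / δ^2)) < 1) :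
    ∃ H : SimpleGraph (Fin n), 0 < tIndW H W ∧
      ∀ m, m ≤ s → ∀ F : SimpleGraph (Fin m), |tIndG F H - tIndW F W| ≤ δ := by
  classical
  set Bad : Finset (SimpleGraph (Fin n)) := Finset.univ.filter
    (fun H => ∃ m, m ≤ s ∧ ∃ F : SimpleGraph (Fin m), δ < |tIndG F H - tIndW F W|) with hBad
  have hBadsum : ∑ H ∈ Bad, tIndW H W < 1 := by
    have step1 : ∑ H ∈ Bad, tIndW H W ≤ ∑ H ∈ Bad, ∑ m ∈ Finset.range (s+1),
        ∑ F : SimpleGraph (Fin m),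
          (if δ < |tIndG F H - tIndW F W| then tIndW H W else 0) := by
      apply Finset.sum_le_sum
      intro H hH
      rw [hBad, Finset.mem_filter] at hH
      obtain ⟨_, m0, hm0, F0, hF0⟩ := hH
      have hterm : tIndW H W ≤ ∑ F : SimpleGraph (Fin m0),
          (if δ < |tIndG F H - tIndW F W| then tIndW H W else 0) := by
        have hmem : (if δ < |tIndG F0 H - tIndW F0 W| then tIndW H W else 0) = tIndW H W :=
          if_pos hF0
        have hs1 := Finset.single_le_sum (f := fun F : SimpleGraph (Fin m0) =>
          if δ < |tIndG F H - tIndW F W| then tIndW H W else 0) (fun F _ => by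
            show (0:ℝ) ≤ if δ < |tIndG F H - tIndW F W| then tIndW H W else 0
            by_cases hcc : δ < |tIndG F H - tIndW F W|
            · rw [if_pos hcc]; exact tIndW_nonneg hW H
            · rw [if_neg hcc]) (Finset.mem_univ F0)
        calc tIndW H W = (if δ < |tIndG F0 H - tIndW F0 W| then tIndW H W else 0) := hmem.symm
          _ ≤ _ := hs1
      calc tIndW H W ≤ ∑ F : SimpleGraph (Fin m0),
            (if δ < |tIndG F H - tIndW F W| then tIndW H W else 0) := hterm
        _ ≤ ∑ m ∈ Finset.range (s+1), ∑ F : SimpleGraph (Fin m),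
            (if δ < |tIndG F H - tIndW F W| then tIndW H W else 0) := by
          apply Finset.single_le_sum (f := fun m => ∑ F : SimpleGraph (Fin m),
            (if δ < |tIndG F H - tIndW F W| then tIndW H W else 0))
            ?_ (Finset.mem_range.mpr (Nat.lt_succ_of_le hm0))
          intro m _
          apply Finset.sum_nonneg
          intro F _
          by_cases hcc : δ < |tIndG F H - tIndW F W|
          · rw [if_pos hcc]; exact tIndW_nonneg hW H
          · rw [if_neg hcc]
    have step2 : ∑ H ∈ Bad, ∑ m ∈ Finset.range (s+1), ∑ F : SimpleGraph (Fin m),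
        (if δ < |tIndG F H - tIndW F W| then tIndW H W else 0)
        ≤ ∑ H : SimpleGraph (Fin n), ∑ m ∈ Finset.range (s+1), ∑ F : SimpleGraph (Fin m),
        (if δ < |tIndG F H - tIndW F W| then tIndW H W else 0) := by
      apply Finset.sum_le_sum_of_subset_of_nonneg (Finset.filter_subset _ _)
      intro H _ _
      apply Finset.sum_nonneg; intro m _
      apply Finset.sum_nonneg; intro F _
      by_cases hcc : δ < |tIndG F H - tIndW F W|
      · rw [if_pos hcc]; exact tIndW_nonneg hW H
      · rw [if_neg hcc]
    have step3 : ∑ H : SimpleGraph (Fin n), ∑ m ∈ Finset.range (s+1),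
        ∑ F : SimpleGraph (Fin m),
        (if δ < |tIndG F H - tIndW F W| then tIndW H W else 0)
        = ∑ m ∈ Finset.range (s+1), ∑ F : SimpleGraph (Fin m),
          ∑ H ∈ Finset.univ.filter
            (fun H : SimpleGraph (Fin n) => δ < |tIndG F H - tIndW F W|), tIndW H W := by
      rw [Finset.sum_comm]
      refine Finset.sum_congr rfl fun m _ => ?_
      rw [Finset.sum_comm]
      refine Finset.sum_congr rfl fun F _ => ?_
      rw [Finset.sum_filter]
    have step4 : ∑ m ∈ Finset.range (s+1), ∑ F : SimpleGraph (Fin m),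
          ∑ H ∈ Finset.univ.filter
            (fun H : SimpleGraph (Fin n) => δ < |tIndG F H - tIndW F W|), tIndW H W
        ≤ ∑ m ∈ Finset.range (s+1),
          (Fintype.card (SimpleGraph (Fin m)) : ℝ) * (((m:ℝ)^2 / n) / δ^2) := by
      apply Finset.sum_le_sum
      intro m hm
      rw [Finset.mem_range, Nat.lt_succ_iff] at hm
      calc ∑ F : SimpleGraph (Fin m), ∑ H ∈ Finset.univ.filter
            (fun H : SimpleGraph (Fin n) => δ < |tIndG F H - tIndW F W|), tIndW H W
          ≤ ∑ _F : SimpleGraph (Fin m), ((m:ℝ)^2 / n) / δ^2 :=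
            Finset.sum_le_sum (fun F _ => cheb hW (le_trans hm hs) hn F hδ)
        _ = (Fintype.card (SimpleGraph (Fin m)) : ℝ) * (((m:ℝ)^2 / n) / δ^2) := by
            rw [Finset.sum_const, Finset.card_univ, nsmul_eq_mul]
    linarith [step1, step2, step3 ▸ step2, step4]
  have htot := sum_tIndW_one hW n
  have hsplit := Finset.sum_filter_add_sum_filter_not (Finset.univ : Finset (SimpleGraph (Fin n)))
    (fun H => ∃ m, m ≤ s ∧ ∃ F : SimpleGraph (Fin m), δ < |tIndG F H - tIndW F W|)
    (fun H => tIndW H W)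
  have hgoodpos : 0 < ∑ H ∈ Finset.univ.filter
      (fun H : SimpleGraph (Fin n) =>
        ¬ ∃ m, m ≤ s ∧ ∃ F : SimpleGraph (Fin m), δ < |tIndG F H - tIndW F W|), tIndW H W := by
    have : ∑ H ∈ Bad, tIndW H W + ∑ H ∈ Finset.univ.filter
        (fun H : SimpleGraph (Fin n) =>
          ¬ ∃ m, m ≤ s ∧ ∃ F : SimpleGraph (Fin m), δ < |tIndG F H - tIndW F W|), tIndW H W
        = 1 := by rw [← htot]; exact hsplit
    linarith
  obtain ⟨H, hmem2, hlt⟩ := Finset.exists_lt_of_sum_lt (f := fun _ => (0:ℝ))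
    (g := fun H => tIndW H W) (by simpa using hgoodpos)
  simp only [Finset.mem_filter, Finset.mem_univ, true_and, not_exists, not_lt] at hmem2
  exact ⟨H, hlt, fun m hm F => by
    have := hmem2 m
    exact this hm F⟩


def Kc (j : ℕ) : ℕ :=
  ∑ m ∈ Finset.range (j+1), (Fintype.card (SimpleGraph (Fin m))) * m^2 * (j+1)^2

lemma good_of_gt {W : ℝ → ℝ → ℝ} (hW : IsGraphon W) (j n : ℕ) (h : Kc j + j < n) :
    ∃ H : SimpleGraph (Fin n), 0 < tIndW H W ∧
      ∀ m, m ≤ j → ∀ F : SimpleGraph (Fin m), |tIndG F H - tIndW F W| ≤ 1/((j:ℝ)+1) := by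
  have hn : 0 < n := lt_of_le_of_lt (Nat.zero_le _) h
  have hjn : j ≤ n := le_of_lt (lt_of_le_of_lt (Nat.le_add_left j _) h)
  have hδ : (0:ℝ) < 1/((j:ℝ)+1) := by positivity
  apply exists_good hW j n hn hjn hδ
  have hKn : (Kc j : ℝ) < n := by exact_mod_cast lt_of_le_of_lt (Nat.le_add_right _ _) h
  have hnR : (0:ℝ) < n := by exact_mod_cast hn
  have heq : (∑ m ∈ Finset.range (j+1),
      (Fintype.card (SimpleGraph (Fin m)) : ℝ) * (((m:ℝ)^2 / n) / (1/((j:ℝ)+1))^2))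
      = (Kc j : ℝ) / n := by
    rw [Kc]
    push_cast
    rw [Finset.sum_div]
    refine Finset.sum_congr rfl fun m _ => ?_
    field_simp
  rw [heq, div_lt_one hnR]
  exact hKn

lemma exists_pos_seq {W : ℝ → ℝ → ℝ} (hW : IsGraphon W) :
    ∃ Hs : (n : ℕ) → SimpleGraph (Fin n), (∀ n, 0 < tIndW (Hs n) W) ∧
      ∀ (m : ℕ) (F : SimpleGraph (Fin m)),
        Tendsto (fun k => tIndG F (Hs k)) atTop (nhds (tIndW F W)) := by
  classical
  have hex : ∀ n : ℕ, ∃ H : SimpleGraph (Fin n), 0 < tIndW H W := exists_pos_tIndW hW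
  set jsel : ℕ → ℕ := fun n => ((Finset.range (n+1)).filter (fun j => Kc j + j < n)).sup id
    with hjsel
  have hgoodsel : ∀ n : ℕ, ((Finset.range (n+1)).filter (fun j => Kc j + j < n)).Nonempty →
      Kc (jsel n) + jsel n < n := by
    intro n hne
    obtain ⟨b, hb, hsup⟩ := Finset.exists_mem_eq_sup _ hne (id : ℕ → ℕ)
    rw [Finset.mem_filter] at hb
    have : jsel n = b := by rw [hjsel]; exact hsup
    rw [this]
    exact hb.2
  set Hs : (n : ℕ) → SimpleGraph (Fin n) := fun n =>
    if h : Kc (jsel n) + jsel n < n then (good_of_gt hW (jsel n) n h).choose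
    else (hex n).choose with hHs
  refine ⟨Hs, ?_, ?_⟩
  · intro n
    by_cases h : Kc (jsel n) + jsel n < n
    · rw [hHs]
      simp only [dif_pos h]
      exact (good_of_gt hW (jsel n) n h).choose_spec.1
    · rw [hHs]
      simp only [dif_neg h]
      exact (hex n).choose_spec
  · intro m F
    rw [Metric.tendsto_atTop]
    intro ε hε
    obtain ⟨j0, hj0m, hj0ε⟩ : ∃ j0, m ≤ j0 ∧ 1/((j0:ℝ)+1) < ε := by
      obtain ⟨k, hk⟩ := exists_nat_gt (1/ε)
      refine ⟨max m k, le_max_left _ _, ?_⟩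
      have hkc : (k:ℝ) ≤ ((max m k : ℕ) : ℝ) := by exact_mod_cast le_max_right m k
      have hk1 : 1/ε < ((max m k : ℕ) : ℝ) + 1 := by linarith
      rw [div_lt_iff₀ (by positivity)]
      have h2 : 1 < ε * (((max m k : ℕ) : ℝ) + 1) := by
        rw [div_lt_iff₀ hε] at hk1
        linarith [hk1]
      linarith [h2]
    refine ⟨Kc j0 + j0 + 1, fun n hn => ?_⟩
    have hj0mem : j0 ∈ (Finset.range (n+1)).filter (fun j => Kc j + j < n) := by
      rw [Finset.mem_filter, Finset.mem_range]
      omega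
    have hne : ((Finset.range (n+1)).filter (fun j => Kc j + j < n)).Nonempty := ⟨j0, hj0mem⟩
    have hsel := hgoodsel n hne
    have hj0le : j0 ≤ jsel n := Finset.le_sup (f := (id : ℕ → ℕ)) hj0mem
    have hdef : Hs n = (good_of_gt hW (jsel n) n hsel).choose := by
      rw [hHs]
      simp only [dif_pos hsel]
    have hspec := (good_of_gt hW (jsel n) n hsel).choose_spec.2
    have hbound := hspec m (le_trans hj0m hj0le) F
    rw [Real.dist_eq, hdef]
    calc |tIndG F (good_of_gt hW (jsel n) n hsel).choose - tIndW F W|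
        ≤ 1/(((jsel n):ℝ)+1) := hbound
      _ ≤ 1/((j0:ℝ)+1) := by
          apply one_div_le_one_div_of_le (by positivity)
          have : (j0:ℝ) ≤ ((jsel n : ℕ):ℝ) := by exact_mod_cast hj0le
          linarith
      _ < ε := hj0ε

lemma mem_P_of_pos {P : ∀ n : ℕ, Set (SimpleGraph (Fin n))} (hP : Hereditary P)
    {W : ℝ → ℝ → ℝ} (G0 : ℕ → Σ n : ℕ, SimpleGraph (Fin n))
    (hmem : ∀ k, (G0 k).2 ∈ P (G0 k).1) (hconv : ConvergesTo G0 W)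
    {n : ℕ} (H : SimpleGraph (Fin n)) (hpos : 0 < tIndW H W) : H ∈ P n := by
  have htend := hconv.2 n H
  have hev : ∀ᶠ k in atTop, 0 < tIndG H (G0 k).2 := htend.eventually (eventually_gt_nhds hpos)
  obtain ⟨k, hk⟩ := hev.exists
  have hcard : (Finset.univ.filter fun φ : Fin n ↪ Fin (G0 k).1 =>
      ∀ u v, (G0 k).2.Adj (φ u) (φ v) ↔ H.Adj u v).card ≠ 0 := by
    intro hzero
    rw [tIndG, hzero] at hk
    simp at hk
  obtain ⟨φ, hφ⟩ := Finset.card_pos.mp (Nat.pos_of_ne_zero hcard)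
  rw [Finset.mem_filter] at hφ
  exact hP n (G0 k).1 H (G0 k).2 (hmem k) ⟨φ, hφ.2⟩

lemma no_induced_of_pos {W : ℝ → ℝ → ℝ} (hW : IsGraphon W) {m n : ℕ} (F : SimpleGraph (Fin m))
    (hzero : tIndW F W = 0) (H : SimpleGraph (Fin n)) (hpos : 0 < tIndW H W) :
    ¬ IsInducedSubgraph F H := by
  rintro ⟨φ, hφ⟩
  have hmn : m ≤ n := by
    have := Fintype.card_le_of_embedding φ
    simpa using this
  have hfm := first_moment hW hmn F
  rw [hzero] at hfm
  have hterms : ∀ H' ∈ (Finset.univ : Finset (SimpleGraph (Fin n))),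
      0 ≤ tIndG F H' * tIndW H' W :=
    fun H' _ => mul_nonneg (tIndG_nonneg F H') (tIndW_nonneg hW H')
  have hzero' := (Finset.sum_eq_zero_iff_of_nonneg hterms).mp hfm H (Finset.mem_univ H)
  have hGpos : 0 < tIndG F H := by
    rw [tIndG]
    apply div_pos
    · have : 0 < (Finset.univ.filter fun ψ : Fin m ↪ Fin n =>
          ∀ u v, H.Adj (ψ u) (ψ v) ↔ F.Adj u v).card :=
        Finset.card_pos.mpr ⟨φ, Finset.mem_filter.mpr ⟨Finset.mem_univ _, hφ⟩⟩
      exact_mod_cast this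
    · exact descFactorial_pos' hmn
  exact absurd hzero' (ne_of_gt (mul_pos hGpos hpos))

lemma tIndG_zero_of_no_induced {m n : ℕ} (F : SimpleGraph (Fin m)) (G : SimpleGraph (Fin n))
    (h : ¬ IsInducedSubgraph F G) : tIndG F G = 0 := by
  rw [tIndG]
  have hempty : (Finset.univ.filter fun φ : Fin m ↪ Fin n =>
      ∀ u v, G.Adj (φ u) (φ v) ↔ F.Adj u v) = ∅ :=
    Finset.filter_eq_empty_iff.mpr (fun {φ} _ hφ => h ⟨φ, hφ⟩)
  rw [hempty]
  simp

-- CHUNK10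

/-- Let `P` be hereditary and `ℱ` a family of graphs, and let `P_ℱ` consist of
the graphs in `P` with no induced subgraph isomorphic to a member of `ℱ`. A graphon `W` is a
limit of graphs in `P_ℱ` iff it is a limit of graphs in `P` and `t_ind(F,W) = 0` for `F ∈ ℱ`. -/
theorem limit_of_subclass_with_forbidden_induced_iff
    (P : ∀ n : ℕ, Set (SimpleGraph (Fin n))) (hP : Hereditary P)
    (ℱ : ∀ n : ℕ, Set (SimpleGraph (Fin n)))
    (W : ℝ → ℝ → ℝ) (hW : IsGraphon W) :
    (∃ G : ℕ → Σ n : ℕ, SimpleGraph (Fin n),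
        (∀ k, (G k).2 ∈ P (G k).1 ∧
          ∀ (m : ℕ), ∀ F ∈ ℱ m, ¬ IsInducedSubgraph F (G k).2) ∧
        ConvergesTo G W) ↔
    ((∃ G : ℕ → Σ n : ℕ, SimpleGraph (Fin n),
        (∀ k, (G k).2 ∈ P (G k).1) ∧ ConvergesTo G W) ∧
      ∀ (m : ℕ), ∀ F ∈ ℱ m, tIndW F W = 0) := by
  constructor
  · rintro ⟨G, hGprop, hGconv⟩
    refine ⟨⟨G, fun k => (hGprop k).1, hGconv⟩, ?_⟩
    intro m F hF
    have hzero : ∀ k, tIndG F (G k).2 = 0 :=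
      fun k => tIndG_zero_of_no_induced F (G k).2 ((hGprop k).2 m F hF)
    have htend := hGconv.2 m F
    simp only [hzero] at htend
    exact tendsto_nhds_unique htend tendsto_const_nhds
  · rintro ⟨⟨G0, hmem, hconv⟩, hzero⟩
    obtain ⟨Hs, hpos, htend⟩ := exists_pos_seq hW
    refine ⟨fun k => ⟨k, Hs k⟩, fun k => ⟨?_, ?_⟩, ?_, ?_⟩
    · exact mem_P_of_pos hP G0 hmem hconv (Hs k) (hpos k)
    · intro m F hF
      exact no_induced_of_pos hW F (hzero m F hF) (Hs k) (hpos k)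
    · exact tendsto_id
    · intro m F
      exact htend m F
end
end

section
/- Define the graphon W : [0,1]² → [0,1] by W(x,y) = (𝟙[x ≥ 1/2] + 𝟙[y ≥ 1/2])/2, so W takes the value 0 if x,y < 1/2, the value 1/2 if exactly one of x,y is ≥ 1/2, and the value 1 if x,y ≥ 1/2. Then: (a) t_ind(C_k, W) = 0 for every cycle C_k with k ≥ 4; and (b) the set {(x,y) ∈ [0,1]² : W(x,y) ∉ {0,1}} has positive Lebesgue measure (so W is not random-free). Consequently W represents a chordal graph limit that is not random-free. -/
open MeasureTheory Filter
open scoped Classical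

noncomputable section

/-- The adjacency relation of the cycle on `k` vertices `0, …, k-1`. -/
def cycleRel (k : ℕ) (i j : Fin k) : Prop :=
  (i.val + 1 = j.val ∨ j.val + 1 = i.val) ∨
  ((i.val = 0 ∧ j.val = k - 1) ∨ (j.val = 0 ∧ i.val = k - 1))

/-- The cycle graph `C_k` on vertex set `Fin k`. -/
def cycleGraph' (k : ℕ) : SimpleGraph (Fin k) := SimpleGraph.fromRel (cycleRel k)

/-- The graphon `W(x,y) = (𝟙[x ≥ 1/2] + 𝟙[y ≥ 1/2]) / 2`. -/
def W₀ (x y : ℝ) : ℝ :=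
  ((if (1:ℝ)/2 ≤ x then (1:ℝ) else 0) + (if (1:ℝ)/2 ≤ y then (1:ℝ) else 0)) / 2

lemma W₀_zero {x y : ℝ} (hx : ¬ (1:ℝ)/2 ≤ x) (hy : ¬ (1:ℝ)/2 ≤ y) : W₀ x y = 0 := by
  rw [W₀, if_neg hx, if_neg hy]; norm_num

lemma W₀_one {x y : ℝ} (hx : (1:ℝ)/2 ≤ x) (hy : (1:ℝ)/2 ≤ y) : W₀ x y = 1 := by
  rw [W₀, if_pos hx, if_pos hy]; norm_num

lemma prod_zero {k : ℕ} (hk : 4 ≤ k) (x : Fin k → ℝ) :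
    ∏ p ∈ Finset.univ.filter (fun p : Fin k × Fin k => p.1 < p.2),
      (if (cycleGraph' k).Adj p.1 p.2 then W₀ (x p.1) (x p.2)
       else 1 - W₀ (x p.1) (x p.2)) = 0 := by
  set v0 : Fin k := ⟨0, by omega⟩
  set v1 : Fin k := ⟨1, by omega⟩
  set v2 : Fin k := ⟨2, by omega⟩
  set v3 : Fin k := ⟨3, by omega⟩
  have adj01 : (cycleGraph' k).Adj v0 v1 := by
    simp [cycleGraph', cycleRel, v0, v1, Fin.ext_iff]
  have adj12 : (cycleGraph' k).Adj v1 v2 := by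
    simp [cycleGraph', cycleRel, v1, v2, Fin.ext_iff]
  have adj23 : (cycleGraph' k).Adj v2 v3 := by
    simp [cycleGraph', cycleRel, v2, v3, Fin.ext_iff]
  have nonadj02 : ¬ (cycleGraph' k).Adj v0 v2 := by
    simp [cycleGraph', cycleRel, v0, v2, Fin.ext_iff]; omega
  have nonadj13 : ¬ (cycleGraph' k).Adj v1 v3 := by
    simp [cycleGraph', cycleRel, v1, v3, Fin.ext_iff]
  -- helper to conclude
  have key : ∀ (i j : Fin k), i.val < j.val →
      (if (cycleGraph' k).Adj i j then W₀ (x i) (x j) else 1 - W₀ (x i) (x j)) = 0 →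
      (∏ p ∈ Finset.univ.filter (fun p : Fin k × Fin k => p.1 < p.2),
        (if (cycleGraph' k).Adj p.1 p.2 then W₀ (x p.1) (x p.2)
         else 1 - W₀ (x p.1) (x p.2))) = 0 := by
    intro i j hij hz
    exact Finset.prod_eq_zero (i := (i, j)) (Finset.mem_filter.mpr ⟨Finset.mem_univ _, hij⟩) hz
  by_cases hB1 : (1:ℝ)/2 ≤ x v1
  · by_cases hB3 : (1:ℝ)/2 ≤ x v3
    · exact key v1 v3 (by simp [v1, v3]) (by rw [if_neg nonadj13, W₀_one hB1 hB3]; ring)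
    · by_cases hB2 : (1:ℝ)/2 ≤ x v2
      · by_cases hB0 : (1:ℝ)/2 ≤ x v0
        · exact key v0 v2 (by simp [v0, v2]) (by rw [if_neg nonadj02, W₀_one hB0 hB2]; ring)
        · rcases eq_or_lt_of_le hk with hk4 | hk5
          · -- k = 4 : edge (0,3)
            have adj03 : (cycleGraph' k).Adj v0 v3 := by
              simp [cycleGraph', cycleRel, v0, v3, Fin.ext_iff]; omega
            exact key v0 v3 (by simp [v0, v3]) (by rw [if_pos adj03, W₀_zero hB0 hB3])
          · set v4 : Fin k := ⟨4, by omega⟩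
            have adj34 : (cycleGraph' k).Adj v3 v4 := by
              simp [cycleGraph', cycleRel, v3, v4, Fin.ext_iff]
            have nonadj24 : ¬ (cycleGraph' k).Adj v2 v4 := by
              simp [cycleGraph', cycleRel, v2, v4, Fin.ext_iff]
            by_cases hB4 : (1:ℝ)/2 ≤ x v4
            · exact key v2 v4 (by simp [v2, v4]) (by rw [if_neg nonadj24, W₀_one hB2 hB4]; ring)
            · exact key v3 v4 (by simp [v3, v4]) (by rw [if_pos adj34, W₀_zero hB3 hB4])
      · exact key v2 v3 (by simp [v2, v3]) (by rw [if_pos adj23, W₀_zero hB2 hB3])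
  · by_cases hB2 : (1:ℝ)/2 ≤ x v2
    · by_cases hB0 : (1:ℝ)/2 ≤ x v0
      · exact key v0 v2 (by simp [v0, v2]) (by rw [if_neg nonadj02, W₀_one hB0 hB2]; ring)
      · exact key v0 v1 (by simp [v0, v1]) (by rw [if_pos adj01, W₀_zero hB0 hB1])
    · exact key v1 v2 (by simp [v1, v2]) (by rw [if_pos adj12, W₀_zero hB1 hB2])

/-- For the graphon `W₀`: (a) `t_ind(C_k, W₀) = 0` for every `k ≥ 4`
(so `W₀` represents a chordal graph limit), and (b) the set where `W₀` takes a value other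
than `0` or `1` on `[0,1]²` has positive Lebesgue measure (so `W₀` is not random-free). -/
theorem chordal_graphon_not_random_free :
    (∀ k : ℕ, 4 ≤ k → tIndW (cycleGraph' k) W₀ = 0) ∧
    0 < volume {q : ℝ × ℝ |
        q ∈ Set.Icc (0:ℝ) 1 ×ˢ Set.Icc (0:ℝ) 1 ∧ W₀ q.1 q.2 ≠ 0 ∧ W₀ q.1 q.2 ≠ 1} := by
  constructor
  · intro k hk
    have h : (fun x : Fin k → ℝ =>
        ∏ p ∈ Finset.univ.filter (fun p : Fin k × Fin k => p.1 < p.2),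
          (if (cycleGraph' k).Adj p.1 p.2 then W₀ (x p.1) (x p.2)
           else 1 - W₀ (x p.1) (x p.2))) = fun _ => (0:ℝ) := funext (prod_zero hk)
    rw [tIndW, h, integral_zero]
  · have hsub : Set.Ico (0:ℝ) (1/2) ×ˢ Set.Icc (1/2:ℝ) 1 ⊆
        {q : ℝ × ℝ | q ∈ Set.Icc (0:ℝ) 1 ×ˢ Set.Icc (0:ℝ) 1 ∧ W₀ q.1 q.2 ≠ 0 ∧ W₀ q.1 q.2 ≠ 1} := by
      rintro ⟨a, b⟩ ⟨⟨ha0, ha1⟩, hb0, hb1⟩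
      have hna : ¬ (1:ℝ)/2 ≤ a := not_le.mpr ha1
      have hW : W₀ a b = 1/2 := by rw [W₀, if_neg hna, if_pos hb0]; norm_num
      refine ⟨⟨⟨ha0, by linarith⟩, ⟨by linarith, hb1⟩⟩, ?_, ?_⟩ <;> rw [hW] <;> norm_num
    have hvol : volume (Set.Ico (0:ℝ) (1/2) ×ˢ Set.Icc (1/2:ℝ) 1) = ENNReal.ofReal (1/4) := by
      rw [Measure.volume_eq_prod, Measure.prod_prod, Real.volume_Ico, Real.volume_Icc]
      rw [← ENNReal.ofReal_mul (by norm_num)]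
      norm_num
    calc (0:ENNReal) < ENNReal.ofReal (1/4) := by norm_num
      _ = volume (Set.Ico (0:ℝ) (1/2) ×ˢ Set.Icc (1/2:ℝ) 1) := hvol.symm
      _ ≤ _ := measure_mono hsub
end
end

section
/- Let F be the bipartite graph with vertex parts V₁ = {A,B,C,D,E,F} and V₂ = {a,b,c,d,e,f} and edge set {Ab, Bb, Cc, Dd, Ee, Ff, Ac, Bd, Ae, Bf, Ca, Cb, Db, Fa}. Then every simple graph F₁ on this 12-element vertex set whose edges between V₁ and V₂ are exactly the edges of F (i.e., F₁ is obtained from F by adding some set of edges within V₁ and within V₂) contains an induced path on 4 vertices: there exist distinct vertices v₁, v₂, v₃, v₄ of F₁ such that the only adjacencies among them in F₁ are v₁v₂, v₂v₃, v₃v₄. In particular, no such F₁ is a cograph. -/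
/-- The edges of the bipartite graph `F` between `V₁ = {A,…,F} = {0,…,5}` and
`V₂ = {a,…,f} = {6,…,11}`: the edges `Ab, Bb, Cc, Dd, Ee, Ff, Ac, Bd, Ae, Bf, Ca, Cb, Db, Fa`. -/
def bipEdges : Finset (Fin 12 × Fin 12) :=
  {(0, 7), (1, 7), (2, 8), (3, 9), (4, 10), (5, 11), (0, 8),
   (1, 9), (0, 10), (1, 11), (2, 6), (2, 7), (3, 7), (5, 6)}

/-- Every graph on the `12` vertices whose edges between the parts
`V₁ = {0,…,5}` and `V₂ = {6,…,11}` are exactly the edges of the bipartite graph `F`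
(edges inside the parts being arbitrary) contains an induced path on `4` vertices;
in particular it is not a cograph. -/
theorem no_cograph_extension
    (G : SimpleGraph (Fin 12))
    (hbip : ∀ u v : Fin 12, u.val < 6 → 6 ≤ v.val → (G.Adj u v ↔ (u, v) ∈ bipEdges)) :
    ∃ v₁ v₂ v₃ v₄ : Fin 12,
      v₁ ≠ v₂ ∧ v₁ ≠ v₃ ∧ v₁ ≠ v₄ ∧ v₂ ≠ v₃ ∧ v₂ ≠ v₄ ∧ v₃ ≠ v₄ ∧
      G.Adj v₁ v₂ ∧ G.Adj v₂ v₃ ∧ G.Adj v₃ v₄ ∧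
      ¬ G.Adj v₁ v₃ ∧ ¬ G.Adj v₁ v₄ ∧ ¬ G.Adj v₂ v₄ := by
  by_cases h_0_1 : G.Adj 0 1
  · by_cases h_6_9 : G.Adj 6 9
    · exact ⟨0, 1, 9, 6, by decide, by decide, by decide, by decide, by decide, by decide, h_0_1, (hbip 1 9 (by decide) (by decide)).mpr (by decide), h_6_9.symm, (fun h => absurd ((hbip 0 9 (by decide) (by decide)).mp h) (by decide)), (fun h => absurd ((hbip 0 6 (by decide) (by decide)).mp h) (by decide)), (fun h => absurd ((hbip 1 6 (by decide) (by decide)).mp h) (by decide))⟩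
    · by_cases h_6_11 : G.Adj 6 11
      · exact ⟨0, 1, 11, 6, by decide, by decide, by decide, by decide, by decide, by decide, h_0_1, (hbip 1 11 (by decide) (by decide)).mpr (by decide), h_6_11.symm, (fun h => absurd ((hbip 0 11 (by decide) (by decide)).mp h) (by decide)), (fun h => absurd ((hbip 0 6 (by decide) (by decide)).mp h) (by decide)), (fun h => absurd ((hbip 1 6 (by decide) (by decide)).mp h) (by decide))⟩
      · by_cases h_6_8 : G.Adj 6 8
        · exact ⟨1, 0, 8, 6, by decide, by decide, by decide, by decide, by decide, by decide, h_0_1.symm, (hbip 0 8 (by decide) (by decide)).mpr (by decide), h_6_8.symm, (fun h => absurd ((hbip 1 8 (by decide) (by decide)).mp h) (by decide)), (fun h => absurd ((hbip 1 6 (by decide) (by decide)).mp h) (by decide)), (fun h => absurd ((hbip 0 6 (by decide) (by decide)).mp h) (by decide))⟩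
        · by_cases h_0_2 : G.Adj 0 2
          · by_cases h_1_2 : G.Adj 1 2
            · exact ⟨6, 2, 1, 9, by decide, by decide, by decide, by decide, by decide, by decide, ((hbip 2 6 (by decide) (by decide)).mpr (by decide)).symm, h_1_2.symm, (hbip 1 9 (by decide) (by decide)).mpr (by decide), (fun h => absurd ((hbip 1 6 (by decide) (by decide)).mp h.symm) (by decide)), h_6_9, (fun h => absurd ((hbip 2 9 (by decide) (by decide)).mp h) (by decide))⟩
            · exact ⟨1, 0, 2, 6, by decide, by decide, by decide, by decide, by decide, by decide, h_0_1.symm, h_0_2, (hbip 2 6 (by decide) (by decide)).mpr (by decide), h_1_2, (fun h => absurd ((hbip 1 6 (by decide) (by decide)).mp h) (by decide)), (fun h => absurd ((hbip 0 6 (by decide) (by decide)).mp h) (by decide))⟩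
          · exact ⟨0, 8, 2, 6, by decide, by decide, by decide, by decide, by decide, by decide, (hbip 0 8 (by decide) (by decide)).mpr (by decide), ((hbip 2 8 (by decide) (by decide)).mpr (by decide)).symm, (hbip 2 6 (by decide) (by decide)).mpr (by decide), h_0_2, (fun h => absurd ((hbip 0 6 (by decide) (by decide)).mp h) (by decide)), (fun h' => h_6_8 h'.symm)⟩
  · by_cases h_7_9 : G.Adj 7 9
    · by_cases h_7_11 : G.Adj 7 11
      · by_cases h_0_5 : G.Adj 0 5
        · exact ⟨5, 0, 7, 9, by decide, by decide, by decide, by decide, by decide, by decide, h_0_5.symm, (hbip 0 7 (by decide) (by decide)).mpr (by decide), h_7_9, (fun h => absurd ((hbip 5 7 (by decide) (by decide)).mp h) (by decide)), (fun h => absurd ((hbip 5 9 (by decide) (by decide)).mp h) (by decide)), (fun h => absurd ((hbip 0 9 (by decide) (by decide)).mp h) (by decide))⟩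
        · exact ⟨0, 7, 11, 5, by decide, by decide, by decide, by decide, by decide, by decide, (hbip 0 7 (by decide) (by decide)).mpr (by decide), h_7_11, ((hbip 5 11 (by decide) (by decide)).mpr (by decide)).symm, (fun h => absurd ((hbip 0 11 (by decide) (by decide)).mp h) (by decide)), h_0_5, (fun h => absurd ((hbip 5 7 (by decide) (by decide)).mp h.symm) (by decide))⟩
      · exact ⟨0, 7, 1, 11, by decide, by decide, by decide, by decide, by decide, by decide, (hbip 0 7 (by decide) (by decide)).mpr (by decide), ((hbip 1 7 (by decide) (by decide)).mpr (by decide)).symm, (hbip 1 11 (by decide) (by decide)).mpr (by decide), h_0_1, (fun h => absurd ((hbip 0 11 (by decide) (by decide)).mp h) (by decide)), h_7_11⟩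
    · exact ⟨0, 7, 1, 9, by decide, by decide, by decide, by decide, by decide, by decide, (hbip 0 7 (by decide) (by decide)).mpr (by decide), ((hbip 1 7 (by decide) (by decide)).mpr (by decide)).symm, (hbip 1 9 (by decide) (by decide)).mpr (by decide), h_0_1, (fun h => absurd ((hbip 0 9 (by decide) (by decide)).mp h) (by decide)), h_7_9⟩
end
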